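/- Let p be an odd prime, x a nonzero square in F_p, and a in F_p such that a^2 - x is not a square in F_p. Working in the field F_p(√(a^2 - x)) ≅ F_{p^2}, the element (a + √(a^2 - x))^((p+1)/2) lies in F_p and its square equals x. -/

import Mathlib

/-! The Frobenius `z ↦ z ^ p` fixes `F_p` and sends `s = √(a² - x)` to `-s`, since Euler's criterion
gives `s ^ (p - 1) = (a² - x) ^ ((p - 1) / 2) = -1`. Hence `(a + s) ^ (p + 1) = (a - s)(a + s) = x`,
and a square root in `F` of a square `u²` of `F_p` is `±u`, so it lies in `F_p`. -/

theorem ZMod.pow_div_two_eq_neg_one_of_not_isSquare {p : ℕ} [Fact p.Prime] {d : ZMod p}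
    (hd : ¬IsSquare d) : d ^ (p / 2) = -1 := by
  have hd0 : d ≠ 0 := by
    rintro rfl
    exact hd IsSquare.zero
  exact (ZMod.pow_div_two_eq_neg_one_or_one p hd0).resolve_left
    fun h => hd ((ZMod.euler_criterion p hd0).mpr h)

theorem exists_algebraMap_eq_of_sq_eq_algebraMap {R F : Type*} [CommRing R] [CommRing F]
    [NoZeroDivisors F] [Algebra R F] {u : R} (hu : IsSquare u) {z : F}
    (h : z ^ 2 = algebraMap R F u) : ∃ y : R, z = algebraMap R F y := by
  obtain ⟨v, rfl⟩ := hu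
  rw [← sq, map_pow] at h
  rcases sq_eq_sq_iff_eq_or_eq_neg.mp h with h | h
  exacts [⟨v, h⟩, ⟨-v, by rw [h, map_neg]⟩]

section Cipolla

variable {p : ℕ} [Fact p.Prime] {F : Type*} [CommRing F] [Algebra (ZMod p) F]

theorem pow_prime_eq_neg_of_sq_eq_algebraMap (hodd : Odd p) {d : ZMod p} (hd : ¬IsSquare d)
    {s : F} (hs : s ^ 2 = algebraMap (ZMod p) F d) : s ^ p = -s := by
  obtain ⟨k, rfl⟩ := hodd
  have hk : (2 * k + 1) / 2 = k := by omega
  have heuler := ZMod.pow_div_two_eq_neg_one_of_not_isSquare hd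
  rw [hk] at heuler
  calc s ^ (2 * k + 1) = (s ^ 2) ^ k * s := by rw [pow_succ, pow_mul]
    _ = -s := by rw [hs, ← map_pow, heuler, map_neg, map_one, neg_one_mul]

theorem add_pow_prime_eq_sub_of_sq_eq_algebraMap [CharP F p] (hodd : Odd p) {d : ZMod p}
    (hd : ¬IsSquare d) {s : F} (hs : s ^ 2 = algebraMap (ZMod p) F d) (a : ZMod p) :
    (algebraMap (ZMod p) F a + s) ^ p = algebraMap (ZMod p) F a - s := by
  rw [add_pow_char, ← map_pow, ZMod.pow_card, pow_prime_eq_neg_of_sq_eq_algebraMap hodd hd hs,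
    sub_eq_add_neg]

theorem cipolla_pow_sq [CharP F p] (hodd : Odd p) {x a : ZMod p} (hns : ¬IsSquare (a ^ 2 - x))
    {s : F} (hs : s ^ 2 = algebraMap (ZMod p) F (a ^ 2 - x)) :
    ((algebraMap (ZMod p) F a + s) ^ ((p + 1) / 2)) ^ 2 = algebraMap (ZMod p) F x := by
  set f := algebraMap (ZMod p) F
  have hp : (p + 1) / 2 * 2 = p + 1 := by
    obtain ⟨k, rfl⟩ := hodd
    omega
  calc ((f a + s) ^ ((p + 1) / 2)) ^ 2 = (f a + s) ^ p * (f a + s) := by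
        rw [← pow_mul, hp, pow_succ]
    _ = f a ^ 2 - s ^ 2 := by
        rw [add_pow_prime_eq_sub_of_sq_eq_algebraMap hodd hns hs]
        ring
    _ = f x := by rw [hs, ← map_pow, ← map_sub, sub_sub_cancel]

end Cipolla

theorem cipolla_correct_general (p : ℕ) [Fact p.Prime] (hodd : Odd p)
    (x a : ZMod p) (hxsq : IsSquare x) (hns : ¬ IsSquare (a ^ 2 - x))
    (F : Type*) [Field F] [Algebra (ZMod p) F]
    (s : F) (hs : s ^ 2 = algebraMap (ZMod p) F (a ^ 2 - x)) :
    (∃ y : ZMod p, (algebraMap (ZMod p) F a + s) ^ ((p + 1) / 2) =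
        algebraMap (ZMod p) F y) ∧
      ((algebraMap (ZMod p) F a + s) ^ ((p + 1) / 2)) ^ 2 =
        algebraMap (ZMod p) F x := by
  have : CharP F p := charP_of_injective_algebraMap' (ZMod p) p
  have hsq := cipolla_pow_sq hodd hns hs
  exact ⟨exists_algebraMap_eq_of_sq_eq_algebraMap hxsq hsq, hsq⟩

/-- Correctness of Cipolla's algorithm: let `p` be an odd prime, `x` a nonzero
square in `F_p`, and `a ∈ F_p` with `a² - x` a nonsquare. In the field
`F_p(√(a²-x)) ≅ F_{p²}` (a field `F` of cardinality `p²` with a square root `s`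
of `a² - x`), the element `(a + s)^((p+1)/2)` lies in `F_p` and its square is `x`. -/
theorem cipolla_correct (p : ℕ) [Fact p.Prime] (hodd : Odd p)
    (x a : ZMod p) (hx : x ≠ 0) (hxsq : IsSquare x) (hns : ¬ IsSquare (a ^ 2 - x))
    (F : Type*) [Field F] [Algebra (ZMod p) F] (hF : Nat.card F = p ^ 2)
    (s : F) (hs : s ^ 2 = algebraMap (ZMod p) F (a ^ 2 - x)) :
    (∃ y : ZMod p, (algebraMap (ZMod p) F a + s) ^ ((p + 1) / 2) =
        algebraMap (ZMod p) F y) ∧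
      ((algebraMap (ZMod p) F a + s) ^ ((p + 1) / 2)) ^ 2 =
        algebraMap (ZMod p) F x :=
  cipolla_correct_general p hodd x a hxsq hns F s hs
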